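/- arXiv:1507.00989 — 2 statements merged into one kernel-verified Lean document; each statement's English description precedes it below -/
import Mathlib

section
/- Let f be a homeomorphism of a compact metric space having the POTP through a set K (for every ε>0 there is δ>0 such that every δ-pseudo-orbit with ξ_0 ∈ K can be ε-shadowed). Then for every ε>0 there is δ>0 such that every δ-pseudo-orbit with ξ_0 in the closed δ-neighborhood B[K,δ] of K can be ε-shadowed. -/
open Metric Set

/-- Natural iterates of a homeomorphism. -/
def hnpow {X : Type*} [TopologicalSpace X] (f : X ≃ₜ X) : ℕ → X ≃ₜ X
  | 0 => Homeomorph.refl X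
  | n+1 => (hnpow f n).trans f

/-- Integer iterates `fⁿ`, `n ∈ ℤ`, of a homeomorphism. -/
def hpow {X : Type*} [TopologicalSpace X] (f : X ≃ₜ X) : ℤ → X ≃ₜ X
  | Int.ofNat n => hnpow f n
  | Int.negSucc n => hnpow f.symm (n+1)

variable {X : Type*} [MetricSpace X]

/-- `ξ` is a `δ`-pseudo-orbit of `f`. -/
def IsPseudoOrbit (f : X ≃ₜ X) (δ : ℝ) (ξ : ℤ → X) : Prop :=
  ∀ n : ℤ, dist (f (ξ n)) (ξ (n+1)) ≤ δ

/-- `ξ` is `ε`-shadowed by the orbit of `y`. -/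
def ShadowedBy (f : X ≃ₜ X) (ε : ℝ) (y : X) (ξ : ℤ → X) : Prop :=
  ∀ n : ℤ, dist (hpow f n y) (ξ n) ≤ ε

/-- `x` is a shadowable point of `f`. -/
def ShadowablePoint (f : X ≃ₜ X) (x : X) : Prop :=
  ∀ ε > 0, ∃ δ > 0, ∀ ξ : ℤ → X, IsPseudoOrbit f δ ξ → ξ 0 = x →
    ∃ y, ShadowedBy f ε y ξ

/-- `f` has the pseudo-orbit tracing property. -/
def POTP (f : X ≃ₜ X) : Prop :=
  ∀ ε > 0, ∃ δ > 0, ∀ ξ : ℤ → X, IsPseudoOrbit f δ ξ → ∃ y, ShadowedBy f ε y ξ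

/-- `x` is a nonwandering point of `f`. -/
def NonWandering (f : X ≃ₜ X) (x : X) : Prop :=
  ∀ U ∈ nhds x, ∃ k : ℕ, 0 < k ∧ ((hpow f (k : ℤ)) '' U ∩ U).Nonempty

/-- `x` is a chain recurrent point of `f`. -/
def ChainRecurrent (f : X ≃ₜ X) (x : X) : Prop :=
  ∀ ρ > 0, ∃ n : ℕ, 0 < n ∧ ∃ c : ℕ → X, c 0 = x ∧ c n = x ∧
    ∀ i < n, dist (f (c i)) (c (i+1)) ≤ ρ

/-- `f` is distal: `inf_{n∈ℤ} d(fⁿ x, fⁿ y) > 0` for all distinct `x, y`. -/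
def Distal (f : X ≃ₜ X) : Prop :=
  ∀ x y : X, x ≠ y → ∃ c > 0, ∀ n : ℤ, c ≤ dist (hpow f n x) (hpow f n y)

/-- `f` is minimal: every full orbit is dense. -/
def MinimalHomeo (f : X ≃ₜ X) : Prop :=
  ∀ x : X, Dense (Set.range fun n : ℤ => hpow f n x)

/-- `f` is equicontinuous (uniformly, over all integer iterates). -/
def EquicontinuousHomeo (f : X ≃ₜ X) : Prop :=
  ∀ α > 0, ∃ β > 0, ∀ x y : X, dist x y ≤ β → ∀ n : ℤ, dist (hpow f n x) (hpow f n y) ≤ α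


/-! Move the initial point `ξ 0` to a nearby point `x ∈ K`: by uniform continuity of `f` this
costs little in the pseudo-orbit constant, and a shadow of the modified sequence still shadows `ξ`
up to `dist x (ξ 0)`. -/

section Perturbation

variable {f : X ≃ₜ X} {ξ ζ : ℤ → X}

theorem IsPseudoOrbit.mono {δ δ' : ℝ} (hξ : IsPseudoOrbit f δ ξ) (hδ : δ ≤ δ') :
    IsPseudoOrbit f δ' ξ :=
  fun n => (hξ n).trans hδ

theorem ShadowedBy.mono {ε ε' : ℝ} {y : X} (hy : ShadowedBy f ε y ξ) (hε : ε ≤ ε') :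
    ShadowedBy f ε' y ξ :=
  fun n => (hy n).trans hε

theorem IsPseudoOrbit.of_forall_dist_le {δ r s : ℝ} (hξ : IsPseudoOrbit f δ ξ)
    (hr : ∀ n, dist (ζ n) (ξ n) ≤ r) (hs : ∀ n, dist (f (ζ n)) (f (ξ n)) ≤ s) :
    IsPseudoOrbit f (s + δ + r) ζ := fun n =>
  calc dist (f (ζ n)) (ζ (n + 1))
      ≤ dist (f (ζ n)) (f (ξ n)) + dist (f (ξ n)) (ξ (n + 1)) +
          dist (ξ (n + 1)) (ζ (n + 1)) := dist_triangle4 _ _ _ _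
    _ ≤ s + δ + r := by
        gcongr
        exacts [hs n, hξ n, dist_comm (ζ (n + 1)) _ ▸ hr (n + 1)]

theorem ShadowedBy.of_forall_dist_le {ε r : ℝ} {y : X} (hy : ShadowedBy f ε y ξ)
    (hr : ∀ n, dist (ξ n) (ζ n) ≤ r) : ShadowedBy f (ε + r) y ζ := fun n =>
  (dist_triangle _ _ _).trans (add_le_add (hy n) (hr n))

theorem dist_update_le {ι : Type*} [DecidableEq ι] (u : ι → X) (k : ι) (x : X) (n : ι) :
    dist (Function.update u k x n) (u n) ≤ dist x (u k) := by
  rcases eq_or_ne n k with rfl | hn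
  · simp
  · simp [Function.update_of_ne hn]

theorem IsPseudoOrbit.update {δ r s : ℝ} {k : ℤ} {x : X} (hξ : IsPseudoOrbit f δ ξ)
    (hx : dist x (ξ k) ≤ r) (hfx : dist (f x) (f (ξ k)) ≤ s) :
    IsPseudoOrbit f (s + δ + r) (Function.update ξ k x) := by
  refine hξ.of_forall_dist_le (fun n => (dist_update_le ξ k x n).trans hx) fun n => ?_
  rcases eq_or_ne n k with rfl | hn
  · simpa using hfx
  · simpa [Function.update_of_ne hn] using dist_nonneg.trans hfx

theorem ShadowedBy.of_update {ε : ℝ} {k : ℤ} {x y : X}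
    (hy : ShadowedBy f ε y (Function.update ξ k x)) : ShadowedBy f (ε + dist x (ξ k)) y ξ :=
  hy.of_forall_dist_le fun n => dist_comm (ξ n) _ ▸ dist_update_le ξ k x n

end Perturbation

theorem stmt17 [CompactSpace X] (f : X ≃ₜ X) (K : Set X)
    (h : ∀ ε > 0, ∃ δ > 0, ∀ ξ : ℤ → X, IsPseudoOrbit f δ ξ → ξ 0 ∈ K →
      ∃ y, ShadowedBy f ε y ξ) :
    ∀ ε > 0, ∃ δ > 0, ∀ ξ : ℤ → X, IsPseudoOrbit f δ ξ →
      ξ 0 ∈ Metric.cthickening δ K → ∃ y, ShadowedBy f ε y ξ := by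
  intro ε hε
  obtain ⟨δ, hδ, hK⟩ := h (ε / 2) (half_pos hε)
  obtain ⟨η, hη, hfη⟩ := Metric.uniformContinuous_iff.mp
    (CompactSpace.uniformContinuous_of_continuous f.continuous) (δ / 3) (by positivity)
  set ρ := min (δ / 3) (min η (ε / 2))
  have hρ : 0 < ρ := by positivity
  have hρδ : ρ ≤ δ / 3 := min_le_left _ _
  have hρη : ρ ≤ η := (min_le_right _ _).trans (min_le_left _ _)
  have hρε : ρ ≤ ε / 2 := (min_le_right _ _).trans (min_le_right _ _)
  refine ⟨ρ / 2, half_pos hρ, fun ξ hξ h0 => ?_⟩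
  obtain ⟨x, hxK, hx⟩ : ∃ x ∈ K, dist (ξ 0) x < ρ :=
    mem_thickening_iff.mp (cthickening_subset_thickening' hρ (half_lt_self hρ) K h0)
  rw [dist_comm] at hx
  have hpo : IsPseudoOrbit f δ (Function.update ξ 0 x) :=
    (hξ.update hx.le (hfη (hx.trans_le hρη)).le).mono (by linarith)
  obtain ⟨y, hy⟩ := hK _ hpo (by simpa using hxK)
  exact ⟨y, hy.of_update.mono (by linarith)⟩
end

section
/- Let X = C ∪ [1,2] ⊆ ℝ with the induced metric, where C is the ternary Cantor set in [0,1], and let f be the identity on X. Then the set of shadowable points of f is C \ {1}, which is nonempty and not compact. -/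
open Metric Set

variable {X : Type*} [MetricSpace X]

lemma preCantorSet_subset_Icc : ∀ n : ℕ, preCantorSet n ⊆ Set.Icc 0 1 := by
  intro n
  induction n with
  | zero => simp
  | succ n ih =>
    rintro x (⟨y, hy, rfl⟩ | ⟨y, hy, rfl⟩) <;>
      obtain ⟨h0, h1⟩ := ih hy <;> constructor <;> simp only <;> linarith

lemma one_sub_pow_mem_helper {x : ℝ} (hx : x ∈ cantorSet) : (2 + x) / 3 ∈ cantorSet := by
  rw [cantorSet, Set.mem_iInter] at hx ⊢
  intro m
  cases m with
  | zero =>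
    obtain ⟨h0, h1⟩ := preCantorSet_subset_Icc 0 (hx 0)
    simp only [preCantorSet_zero, Set.mem_Icc]
    constructor <;> linarith
  | succ k => exact Or.inr ⟨x, hx k, rfl⟩

lemma cantorSet_gap {z : ℝ} (hz : z ∈ cantorSet) : z ≤ 1/3 ∨ 2/3 ≤ z := by
  have h := Set.mem_iInter.mp hz 1
  rcases h with ⟨y, hy, rfl⟩ | ⟨y, hy, rfl⟩
  · left
    have := (preCantorSet_subset_Icc 0 hy).2
    linarith
  · right
    have := (preCantorSet_subset_Icc 0 hy).1
    linarith

lemma cantorSet_3mul {z : ℝ} (hz : z ∈ cantorSet) (h : z ≤ 1/3) : 3 * z ∈ cantorSet := by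
  rw [cantorSet, Set.mem_iInter] at hz ⊢
  intro m
  rcases hz (m+1) with ⟨y, hy, hyz⟩ | ⟨y, hy, hyz⟩
  · have : 3 * z = y := by rw [← hyz]; ring
    rwa [this]
  · exfalso
    have := (preCantorSet_subset_Icc m hy).1
    rw [← hyz] at h; linarith

lemma cantorSet_3mul_sub {z : ℝ} (hz : z ∈ cantorSet) (h : 2/3 ≤ z) : 3 * z - 2 ∈ cantorSet := by
  rw [cantorSet, Set.mem_iInter] at hz ⊢
  intro m
  rcases hz (m+1) with ⟨y, hy, hyz⟩ | ⟨y, hy, hyz⟩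
  · exfalso
    have := (preCantorSet_subset_Icc m hy).2
    rw [← hyz] at h; linarith
  · have : 3 * z - 2 = y := by rw [← hyz]; ring
    rwa [this]

lemma one_sub_pow_mem : ∀ n : ℕ, (1 - (1/3 : ℝ)^n) ∈ cantorSet := by
  intro n
  induction n with
  | zero => simpa using zero_mem_cantorSet
  | succ n ih =>
    have h := one_sub_pow_mem_helper ih
    have : (2 + (1 - (1/3 : ℝ)^n)) / 3 = 1 - (1/3 : ℝ)^(n+1) := by ring
    rwa [this] at h

lemma pow_third_le_one (n : ℕ) : (1/3 : ℝ)^n ≤ 1 :=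
  pow_le_one₀ (by norm_num) (by norm_num)

lemma cantor_gap_right : ∀ n : ℕ, ∀ x ∈ preCantorSet n, x < 1 →
    ∃ b δ : ℝ, 0 < δ ∧ x ≤ b ∧ b + δ ≤ x + (1/3)^n ∧
      ∀ z ∈ cantorSet, z ∉ Set.Ioc b (b + δ) := by
  intro n
  induction n with
  | zero =>
    intro x hx hx1
    obtain ⟨hx0, hx1'⟩ := hx
    rcases le_or_gt x (1/3) with h | h
    · refine ⟨1/3, 1/6, by norm_num, h, by norm_num; linarith, ?_⟩
      intro z hz ⟨hz1, hz2⟩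
      rcases cantorSet_gap hz with h' | h' <;> linarith
    · refine ⟨1, x - 1/3, by linarith, hx1', by linarith, ?_⟩
      intro z hz ⟨hz1, hz2⟩
      have := (cantorSet_subset_unitInterval hz).2
      linarith
  | succ n ih =>
    rintro x (⟨y, hy, rfl⟩ | ⟨y, hy, rfl⟩) hx1
    · -- x = y / 3
      obtain ⟨hy0, hy1⟩ := preCantorSet_subset_Icc n hy
      rcases lt_or_eq_of_le hy1 with hylt | hyeq
      · obtain ⟨b, δ, hδ, hxb, hbd, hgap⟩ := ih y hy hylt
        refine ⟨b/3, δ/3, by linarith, by linarith, by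
          have : b + δ ≤ y + (1/3)^n := hbd
          have h3 : ((1:ℝ)/3)^(n+1) = (1/3)^n/3 := by ring
          rw [h3]; linarith, ?_⟩
        intro z hz ⟨hz1, hz2⟩
        have hlt : z < 2/3 := by
          have : b + δ < 2 := by
            have := pow_third_le_one n
            linarith
          linarith
        have hle : z ≤ 1/3 := by
          rcases cantorSet_gap hz with h' | h'
          · exact h'
          · linarith
        exact hgap (3*z) (cantorSet_3mul hz hle) ⟨by linarith, by linarith⟩
      · -- y = 1, x = 1/3
        subst hyeq
        have hpp : (0:ℝ) < (1/3)^(n+1) := by positivity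
        have hp : ((1:ℝ)/3)^(n+1) ≤ 1/3 := by
          calc ((1:ℝ)/3)^(n+1) = (1/3)^n * (1/3) := by ring
          _ ≤ 1 * (1/3) := by have := pow_third_le_one n; nlinarith [pow_pos (by norm_num : (0:ℝ) < 1/3) n]
          _ = 1/3 := by norm_num
        refine ⟨1/3, (1/3)^(n+1)/2, by positivity, by norm_num, by
          show (1:ℝ)/3 + (1/3)^(n+1)/2 ≤ 1/3 + (1/3)^(n+1); linarith, ?_⟩
        intro z hz ⟨hz1, hz2⟩
        rcases cantorSet_gap hz with h' | h' <;> linarith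
    · -- x = (2 + y)/3
      obtain ⟨hy0, hy1⟩ := preCantorSet_subset_Icc n hy
      have hylt : y < 1 := by by_contra h; push_neg at h; simp only at hx1; linarith
      obtain ⟨b, δ, hδ, hxb, hbd, hgap⟩ := ih y hy hylt
      refine ⟨(2+b)/3, δ/3, by linarith, by simp only; linarith, by
        have h3 : ((1:ℝ)/3)^(n+1) = (1/3)^n/3 := by ring
        simp only; rw [h3]; linarith, ?_⟩
      intro z hz ⟨hz1, hz2⟩
      have hge : 2/3 ≤ z := by linarith
      exact hgap (3*z - 2) (cantorSet_3mul_sub hz hge) ⟨by linarith, by linarith⟩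

lemma cantor_gap_left : ∀ n : ℕ, ∀ x ∈ preCantorSet n, 0 < x →
    ∃ a δ : ℝ, 0 < δ ∧ a ≤ x ∧ x - (1/3)^n ≤ a - δ ∧
      ∀ z ∈ cantorSet, z ∉ Set.Ico (a - δ) a := by
  intro n
  induction n with
  | zero =>
    intro x hx hx0
    obtain ⟨hx0', hx1⟩ := hx
    rcases lt_or_eq_of_le hx1 with h | h
    · refine ⟨0, 1 - x, by linarith, hx0', by linarith, ?_⟩
      intro z hz ⟨hz1, hz2⟩
      have := (cantorSet_subset_unitInterval hz).1
      linarith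
    · subst h
      refine ⟨2/3, 1/6, by norm_num, by norm_num, by norm_num, ?_⟩
      intro z hz ⟨hz1, hz2⟩
      rcases cantorSet_gap hz with h' | h' <;> linarith
  | succ n ih =>
    rintro x (⟨y, hy, rfl⟩ | ⟨y, hy, rfl⟩) hx0
    · obtain ⟨hy0, hy1⟩ := preCantorSet_subset_Icc n hy
      have hy0' : 0 < y := by simp only at hx0; linarith
      obtain ⟨a, δ, hδ, hax, had, hgap⟩ := ih y hy hy0'
      refine ⟨a/3, δ/3, by linarith, by simp only; linarith, by
        have h3 : ((1:ℝ)/3)^(n+1) = (1/3)^n/3 := by ring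
        simp only; rw [h3]; linarith, ?_⟩
      intro z hz ⟨hz1, hz2⟩
      have hle : z ≤ 1/3 := by linarith
      exact hgap (3*z) (cantorSet_3mul hz hle) ⟨by linarith, by linarith⟩
    · obtain ⟨hy0, hy1⟩ := preCantorSet_subset_Icc n hy
      rcases lt_or_eq_of_le hy0 with hy0' | hy0'
      · obtain ⟨a, δ, hδ, hax, had, hgap⟩ := ih y hy hy0'
        refine ⟨(2+a)/3, δ/3, by linarith, by simp only; linarith, by
          have h3 : ((1:ℝ)/3)^(n+1) = (1/3)^n/3 := by ring
          simp only; rw [h3]; linarith, ?_⟩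
        intro z hz ⟨hz1, hz2⟩
        have hgt : 1/3 < z := by
          have := pow_third_le_one n
          linarith
        have hge : 2/3 ≤ z := by
          rcases cantorSet_gap hz with h' | h'
          · linarith
          · exact h'
        exact hgap (3*z - 2) (cantorSet_3mul_sub hz hge) ⟨by linarith, by linarith⟩
      · -- y = 0, x = 2/3
        refine ⟨(2+y)/3, (1/3)^(n+1)/2, by positivity, le_rfl, by
          have : (0:ℝ) < (1/3)^(n+1) := by positivity
          simp only; linarith, ?_⟩
        intro z hz ⟨hz1, hz2⟩
        have hp : ((1:ℝ)/3)^(n+1) ≤ 1/3 := by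
          calc ((1:ℝ)/3)^(n+1) = (1/3)^n * (1/3) := by ring
          _ ≤ 1 * (1/3) := by have := pow_third_le_one n; nlinarith [pow_pos (by norm_num : (0:ℝ) < 1/3) n]
          _ = 1/3 := by norm_num
        rw [← hy0'] at hz1 hz2
        have h1 : 1/3 < z := by norm_num at hz1 ⊢; linarith
        have h2 : z < 2/3 := by norm_num at hz2 ⊢; linarith
        rcases cantorSet_gap hz with h' | h' <;> linarith
lemma hnpow_refl {X : Type*} [TopologicalSpace X] :
    ∀ n : ℕ, hnpow (Homeomorph.refl X) n = Homeomorph.refl X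
  | 0 => rfl
  | n+1 => by rw [hnpow, hnpow_refl n]; rfl

lemma hpow_refl {X : Type*} [TopologicalSpace X] :
    ∀ n : ℤ, hpow (Homeomorph.refl X) n = Homeomorph.refl X
  | Int.ofNat n => hnpow_refl n
  | Int.negSucc n => by rw [hpow, Homeomorph.refl_symm]; exact hnpow_refl (n+1)

theorem stmt18 :
    let Y : Set ℝ := cantorSet ∪ Set.Icc (1 : ℝ) 2
    let f : Y ≃ₜ Y := Homeomorph.refl Y
    {x : Y | ShadowablePoint f x} = {x : Y | (x : ℝ) ∈ cantorSet \ {1}} ∧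
      {x : Y | ShadowablePoint f x}.Nonempty ∧
      ¬ IsCompact {x : Y | ShadowablePoint f x} := by
  intro Y f
  have hf : f = Homeomorph.refl Y := rfl
  have hpowf : ∀ (n : ℤ) (y : Y), hpow f n y = y := by
    intro n y; rw [hf, hpow_refl]; rfl
  have hY12 : ∀ r : ℝ, r ∈ Set.Icc (1:ℝ) 2 → r ∈ Y := fun r hr => Or.inr hr
  have hset : {x : Y | ShadowablePoint f x} = {x : Y | (x : ℝ) ∈ cantorSet \ {1}} := by
    ext x
    simp only [Set.mem_setOf_eq]
    constructor
    · -- shadowable → mem C \ {1}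
      intro hx
      by_contra hmem
      have hx12 : (x:ℝ) ∈ Set.Icc (1:ℝ) 2 := by
        rcases x.2 with h | h
        · have h1 : (x:ℝ) = 1 := by
            by_contra hne
            exact hmem ⟨h, hne⟩
          rw [h1]; exact ⟨le_refl 1, by norm_num⟩
        · exact h
      obtain ⟨δ, hδ, hsh⟩ := hx (1/5) (by norm_num)
      set c : ℝ := if (x:ℝ) ≤ 3/2 then 1 else -1 with hc
      have hcabs : |c| = 1 := by
        by_cases h : (x:ℝ) ≤ 3/2 <;> simp [hc, h]
      have hcmem : ∀ s : ℝ, 0 ≤ s → s ≤ 1/2 → (x:ℝ) + c * s ∈ Set.Icc (1:ℝ) 2 := by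
        intro s h0 h1
        obtain ⟨ha, hb⟩ := hx12
        by_cases h : (x:ℝ) ≤ 3/2 <;> simp only [hc, h, if_true, if_false] <;>
          constructor <;> nlinarith
      set g : ℤ → ℝ := fun n => min (((max n 0 : ℤ) : ℝ) * δ) (1/2) with hg
      have hg0 : ∀ n : ℤ, 0 ≤ g n := by
        intro n
        apply le_min
        · have : (0:ℤ) ≤ max n 0 := le_max_right n 0
          have : (0:ℝ) ≤ ((max n 0 : ℤ) : ℝ) := by exact_mod_cast this
          positivity
        · norm_num
      have hg12 : ∀ n : ℤ, g n ≤ 1/2 := fun n => min_le_right _ _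
      set ξ : ℤ → Y := fun n => ⟨(x:ℝ) + c * g n, hY12 _ (hcmem _ (hg0 n) (hg12 n))⟩ with hξ
      have hgstep : ∀ n : ℤ, g n ≤ g (n+1) ∧ g (n+1) ≤ g n + δ := by
        intro n
        constructor
        · apply min_le_min _ le_rfl
          have h1 : max n 0 ≤ max (n+1) 0 := by omega
          have h1' : ((max n 0 : ℤ) : ℝ) ≤ ((max (n+1) 0 : ℤ) : ℝ) := by exact_mod_cast h1
          nlinarith
        · have h1 : max (n+1) 0 ≤ max n 0 + 1 := by omega
          have h1' : ((max (n+1) 0 : ℤ) : ℝ) ≤ ((max n 0 : ℤ) : ℝ) + 1 := by exact_mod_cast h1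
          calc g (n+1) = min (((max (n+1) 0 : ℤ) : ℝ) * δ) (1/2) := rfl
          _ ≤ min (((max n 0 : ℤ) : ℝ) * δ + δ) (1/2 + δ) := by
              apply min_le_min _ (by linarith)
              nlinarith
          _ = min (((max n 0 : ℤ) : ℝ) * δ) (1/2) + δ := by
              rw [← min_add_add_right]
          _ = g n + δ := rfl
      have hpo : IsPseudoOrbit f δ ξ := by
        intro n
        rw [hf]
        show dist (ξ n) (ξ (n+1)) ≤ δ
        rw [Subtype.dist_eq]
        show |((x:ℝ) + c * g n) - ((x:ℝ) + c * g (n+1))| ≤ δ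
        have he : ((x:ℝ) + c * g n) - ((x:ℝ) + c * g (n+1)) = c * (g n - g (n+1)) := by ring
        rw [he, abs_mul, hcabs, one_mul, abs_sub_comm,
          abs_of_nonneg (by linarith [(hgstep n).1])]
        linarith [(hgstep n).2]
      have hξ0 : ξ 0 = x := by
        apply Subtype.ext
        show (x:ℝ) + c * g 0 = (x:ℝ)
        have : g 0 = 0 := by simp [hg]
        rw [this, mul_zero, add_zero]
      obtain ⟨y, hy⟩ := hsh ξ hpo hξ0
      obtain ⟨N, hN⟩ := exists_nat_ge ((1/2)/δ)
      have hNδ : 1/2 ≤ (N:ℝ) * δ := by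
        rw [div_le_iff₀ hδ] at hN
        linarith
      have hgN : g (N:ℤ) = 1/2 := by
        have h1 : max (N:ℤ) 0 = (N:ℤ) := max_eq_left (by positivity)
        have : (((max (N:ℤ) 0 : ℤ)) : ℝ) = (N:ℝ) := by rw [h1]; exact_mod_cast rfl
        rw [hg]; simp only [this]
        exact min_eq_right hNδ
      have h0 := hy 0
      have hN' := hy (N:ℤ)
      rw [hpowf] at h0 hN'
      have htri : dist (ξ 0) (ξ (N:ℤ)) ≤ 2/5 := by
        calc dist (ξ 0) (ξ (N:ℤ)) ≤ dist (ξ 0) y + dist y (ξ (N:ℤ)) := dist_triangle _ _ _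
        _ ≤ 1/5 + 1/5 := by rw [dist_comm (ξ 0) y]; exact add_le_add h0 hN'
        _ = 2/5 := by norm_num
      have hdist : dist (ξ 0) (ξ (N:ℤ)) = 1/2 := by
        rw [Subtype.dist_eq]
        show |((x:ℝ) + c * g 0) - ((x:ℝ) + c * g (N:ℤ))| = 1/2
        have hg00 : g 0 = 0 := by simp [hg]
        rw [hg00, hgN]
        have : ((x:ℝ) + c * 0) - ((x:ℝ) + c * (1/2)) = c * (-(1/2)) := by ring
        rw [this, abs_mul, hcabs, one_mul]
        norm_num
      linarith [htri, hdist.symm.le]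
    · -- mem C \ {1} → shadowable
      rintro ⟨hC, hne⟩
      intro ε hε
      have hx1 : (x:ℝ) < 1 :=
        lt_of_le_of_ne (cantorSet_subset_unitInterval hC).2 (fun h => hne (by simpa using h))
      have hx0 : (0:ℝ) ≤ (x:ℝ) := (cantorSet_subset_unitInterval hC).1
      obtain ⟨n, hn⟩ : ∃ n : ℕ, (1/3:ℝ)^n < min ε (1 - (x:ℝ)) :=
        exists_pow_lt_of_lt_one (lt_min hε (by linarith)) (by norm_num)
      have hnε : (1/3:ℝ)^n < ε := lt_of_lt_of_le hn (min_le_left _ _)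
      have hn1 : (1/3:ℝ)^n < 1 - (x:ℝ) := lt_of_lt_of_le hn (min_le_right _ _)
      obtain ⟨b, δR, hδR, hxb, hbR, hgapR⟩ :=
        cantor_gap_right n (x:ℝ) (Set.mem_iInter.mp hC n) hx1
      have hb1 : b + δR < 1 := by linarith
      have hbe : b + δR < (x:ℝ) + ε := by linarith
      have hleft : ∃ a δL : ℝ, 0 < δL ∧ a ≤ (x:ℝ) ∧ (x:ℝ) - ε < a - δL ∧
          ∀ z ∈ cantorSet, z ∉ Set.Ico (a - δL) a := by
        rcases eq_or_lt_of_le hx0 with h0 | h0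
        · refine ⟨0, ε/2, by positivity, by linarith, by linarith, ?_⟩
          intro z hz ⟨hz1, hz2⟩
          have := (cantorSet_subset_unitInterval hz).1
          linarith
        · obtain ⟨a, δL, h1, h2, h3, h4⟩ :=
            cantor_gap_left n (x:ℝ) (Set.mem_iInter.mp hC n) h0
          exact ⟨a, δL, h1, h2, by linarith, h4⟩
      obtain ⟨a, δL, hδL, hax, haε, hgapL⟩ := hleft
      refine ⟨min δL δR, lt_min hδL hδR, ?_⟩
      intro ξ hpo hξ0
      refine ⟨x, ?_⟩
      have move : ∀ p q : Y, dist p q ≤ min δL δR →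
          (p:ℝ) ∈ Set.Icc a b → (q:ℝ) ∈ Set.Icc a b := by
        intro p q hpq hp
        rw [Subtype.dist_eq, Real.dist_eq] at hpq
        obtain ⟨hq1, hq2⟩ := abs_le.mp hpq
        by_contra hq
        have hqa : (q:ℝ) < a ∨ b < (q:ℝ) := by
          rcases lt_or_ge (q:ℝ) a with h | h
          · exact Or.inl h
          · right
            by_contra h'
            push_neg at h'
            exact hq ⟨h, h'⟩
        rcases q.2 with hqC | hq12
        · rcases hqa with h | h
          · exact hgapL _ hqC ⟨by
              have := min_le_left δL δR
              linarith [hp.1], h⟩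
          · exact hgapR _ hqC ⟨h, by
              have := min_le_right δL δR
              linarith [hp.2]⟩
        · have hq1' : (1:ℝ) ≤ (q:ℝ) := hq12.1
          have : (q:ℝ) ≤ b + δR := by
            have := min_le_right δL δR
            linarith [hp.2]
          linarith
      have key : ∀ m : ℤ, (ξ m : ℝ) ∈ Set.Icc a b := by
        have base : (ξ 0 : ℝ) ∈ Set.Icc a b := by
          rw [hξ0]; exact ⟨hax, hxb⟩
        intro m
        induction m using Int.induction_on with
        | zero => exact base
        | succ k ih =>
          refine move (ξ k) (ξ (k+1)) ?_ ih
          have h := hpo k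
          rw [hf] at h
          exact h
        | pred k ih =>
          refine move (ξ (-k)) (ξ (-k-1)) ?_ ih
          have h := hpo (-k-1)
          rw [hf] at h
          have he : (-(k:ℤ)-1+1) = -(k:ℤ) := by ring
          rw [he] at h
          rw [dist_comm]
          exact h
      intro m
      rw [hpowf, Subtype.dist_eq, Real.dist_eq]
      obtain ⟨h1, h2⟩ := key m
      rw [abs_le]
      constructor <;> linarith
  refine ⟨hset, ?_, ?_⟩
  · rw [hset]
    exact ⟨⟨0, Or.inl zero_mem_cantorSet⟩, ⟨zero_mem_cantorSet, by norm_num⟩⟩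
  · rw [hset]
    intro hcomp
    have hclosed : IsClosed {x : Y | (x : ℝ) ∈ cantorSet \ {1}} := hcomp.isClosed
    set yl : Y := ⟨1, hY12 1 ⟨le_refl 1, by norm_num⟩⟩ with hyl
    set yseq : ℕ → Y := fun n => ⟨1 - (1/3)^n, Or.inl (one_sub_pow_mem n)⟩ with hys
    have hmem : ∀ n, yseq n ∈ {x : Y | (x : ℝ) ∈ cantorSet \ {1}} := by
      intro n
      refine ⟨one_sub_pow_mem n, ?_⟩
      have : (0:ℝ) < (1/3)^n := by positivity
      simp only [Set.mem_singleton_iff]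
      intro h
      exact (ne_of_gt this) (sub_eq_self.mp h)
    have hlim : Filter.Tendsto yseq Filter.atTop (nhds yl) := by
      rw [tendsto_subtype_rng]
      show Filter.Tendsto (fun n : ℕ => 1 - (1/3:ℝ)^n) Filter.atTop (nhds (1:ℝ))
      have : Filter.Tendsto (fun n : ℕ => (1/3:ℝ)^n) Filter.atTop (nhds 0) :=
        tendsto_pow_atTop_nhds_zero_of_lt_one (by norm_num) (by norm_num)
      have h2 := Filter.Tendsto.const_sub (1:ℝ) this
      simpa using h2
    have h1 : yl ∈ {x : Y | (x : ℝ) ∈ cantorSet \ {1}} :=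
      hclosed.mem_of_tendsto hlim (Filter.Eventually.of_forall hmem)
    exact h1.2 rfl
end
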